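/- Let n ≥ 2, c ∈ ℤ^n with c ≥ 0, a ∈ B(c), and Δ = (Δ_1,…,Δ_{n−1}) ∈ ℤ^{n−1} with −a_{k+1} ≤ Δ_k ≤ c_k − a_k for k = 1,…,n−1, and let f := f_{a,Δ}. Then for every k′ ∈ {1,…,n} and every node v = v_i^{k′}(j) of G^{k′} at a level i < n: (a) if v ≠ v_{k′}^{k′}(1) and v ≠ v_{k′−1}^{k′}(1), then ε(v) = 0; (b) if v = v_{k′}^{k′}(1), then ε(v) = c_{k′} − a_{k′} − Δ_{k′}⁺ ≥ 0; (c) if v = v_{k′−1}^{k′}(1), then ε(v) = −Δ_{k′−1}⁻ ≥ 0. -/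

import Mathlib

open scoped Classical

namespace CrystalA

/-- A node `(i, k, j)` of the (extended) supporting graph stands for `v_i^k(j)`. -/
abbrev Node : Type := ℕ × ℕ × ℕ

/-- Membership in the supporting graph `G`:
`1 ≤ j ≤ i ≤ n` and `i - j + 1 ≤ k ≤ n - j + 1`. -/
def IsNode (n : ℕ) (v : Node) : Prop :=
  1 ≤ v.2.2 ∧ v.2.2 ≤ v.1 ∧ v.1 ≤ n ∧ v.1 + 1 ≤ v.2.1 + v.2.2 ∧ v.2.1 + v.2.2 ≤ n + 1

/-- Membership in the extended graph `Ḡ`: `0 ≤ j ≤ n`, `j ≤ i ≤ n + 1`, `1 ≤ k ≤ n`. -/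
def IsExtNode (n : ℕ) (v : Node) : Prop :=
  v.2.2 ≤ n ∧ v.2.2 ≤ v.1 ∧ v.1 ≤ n + 1 ∧ 1 ≤ v.2.1 ∧ v.2.1 ≤ n

/-- Ascending step `v_i^k(j) → v_{i-1}^k(j)`. -/
def Asc (u w : Node) : Prop := u.2.1 = w.2.1 ∧ u.2.2 = w.2.2 ∧ u.1 = w.1 + 1

/-- Descending step `v_i^k(j) → v_{i+1}^k(j+1)`. -/
def Desc (u w : Node) : Prop := u.2.1 = w.2.1 ∧ w.2.2 = u.2.2 + 1 ∧ w.1 = u.1 + 1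

/-- Edges of the supporting graph `G`. -/
def GEdge (n : ℕ) (u w : Node) : Prop := IsNode n u ∧ IsNode n w ∧ (Asc u w ∨ Desc u w)

/-- Edges of the extended graph `Ḡ`. -/
def ExtEdge (n : ℕ) (u w : Node) : Prop := IsExtNode n u ∧ IsExtNode n w ∧ (Asc u w ∨ Desc u w)

/-- The extension of `f : V(G) → ℤ` to `Ḡ`: on an extra node it takes value `c_k`
if there is a directed path in `Ḡ^k` from it to a node of `G^k`, and `0` otherwise. -/
noncomputable def ext (n : ℕ) (c : ℕ → ℤ) (f : Node → ℤ) (v : Node) : ℤ :=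
  if IsNode n v then f v
  else if ∃ w, IsNode n w ∧ Relation.ReflTransGen (ExtEdge n) v w then c v.2.1 else 0

/-- Increment `∂f` of (the extension of) `f` on the edge `(u, w)`. -/
noncomputable def dP (n : ℕ) (c : ℕ → ℤ) (f : Node → ℤ) (u w : Node) : ℤ :=
  ext n c f u - ext n c f w

/-- Head of the SE-edge of `v = v_i^k(j)`, namely `v_{i+1}^k(j+1)`. -/
def seNode (v : Node) : Node := (v.1 + 1, v.2.1, v.2.2 + 1)

/-- Tail of the SW-edge of `v = v_i^k(j)`, namely `v_{i+1}^k(j)`. -/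
def swNode (v : Node) : Node := (v.1 + 1, v.2.1, v.2.2)

/-- Tail of the NW-edge of `v = v_i^k(j)`, namely `v_{i-1}^k(j-1)`. -/
def nwNode (v : Node) : Node := (v.1 - 1, v.2.1, v.2.2 - 1)

/-- The SE-edge of `v` is tight for `f`. -/
def SEtight (n : ℕ) (c : ℕ → ℤ) (f : Node → ℤ) (v : Node) : Prop :=
  dP n c f v (seNode v) = 0

/-- The SW-edge of `v` is tight for `f`. -/
def SWtight (n : ℕ) (c : ℕ → ℤ) (f : Node → ℤ) (v : Node) : Prop :=
  dP n c f (swNode v) v = 0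

/-- The node `v_i^k(j)` has the switch property in the multinode `V_i(j)`:
SE-edges of preceding nodes are tight and SW-edges of succeeding nodes are tight. -/
def SwitchAt (n : ℕ) (c : ℕ → ℤ) (f : Node → ℤ) (i j k : ℕ) : Prop :=
  (∀ k', i + 1 ≤ k' + j → k' < k → SEtight n c f (i, k', j)) ∧
  (∀ k', k < k' → k' + j ≤ n + 1 → SWtight n c f (i, k', j))

/-- Feasible functions of the crossing model (normalized to vanish off `G`). -/
def Feasible (n : ℕ) (c : ℕ → ℤ) (f : Node → ℤ) : Prop :=
  (∀ u w, GEdge n u w → 0 ≤ f u - f w) ∧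
  (∀ v, IsNode n v → 0 ≤ f v ∧ f v ≤ c v.2.1) ∧
  (∀ i j, 1 ≤ j → j ≤ i → i ≤ n → ∃ k, i + 1 ≤ k + j ∧ k + j ≤ n + 1 ∧ SwitchAt n c f i j k) ∧
  (∀ v, ¬ IsNode n v → f v = 0)

/-- `v_i^k(j)` is the switch-node of the multinode `V_i(j)`: the first node
with the switch property. -/
def IsSwitchNode (n : ℕ) (c : ℕ → ℤ) (f : Node → ℤ) (i j k : ℕ) : Prop :=
  i + 1 ≤ k + j ∧ k + j ≤ n + 1 ∧ SwitchAt n c f i j k ∧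
  ∀ k', i + 1 ≤ k' + j → SwitchAt n c f i j k' → k ≤ k'

/-- The slack `ε(v)` at a node `v = v_i^k(j)`. -/
noncomputable def slack (n : ℕ) (c : ℕ → ℤ) (f : Node → ℤ) (v : Node) : ℤ :=
  dP n c f (nwNode v) v - dP n c f (v.1, v.2.1, v.2.2 - 1) (v.1 + 1, v.2.1, v.2.2)

/-- The total slack `ε_i(j)` at the multinode `V_i(j)`. -/
noncomputable def epsSum (n : ℕ) (c : ℕ → ℤ) (f : Node → ℤ) (i j : ℕ) : ℤ :=
  ∑ k ∈ Finset.Icc (i + 1 - j) (n + 1 - j), slack n c f (i, k, j)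

/-- `ε_i(p, j) = ε_i(p) + ⋯ + ε_i(j)`. -/
noncomputable def epsInt (n : ℕ) (c : ℕ → ℤ) (f : Node → ℤ) (i p j : ℕ) : ℤ :=
  ∑ q ∈ Finset.Icc p j, epsSum n c f i q

/-- The reduced slack `ε̃_i(j)`. -/
noncomputable def redSlack (n : ℕ) (c : ℕ → ℤ) (f : Node → ℤ) (i j : ℕ) : ℤ :=
  if h : (Finset.Icc 1 j).Nonempty
  then max 0 ((Finset.Icc 1 j).inf' h fun p => epsInt n c f i p j)
  else 0

/-- `V_i(j)` is the active multinode for `f` and color `i`. -/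
def Active (n : ℕ) (c : ℕ → ℤ) (f : Node → ℤ) (i j : ℕ) : Prop :=
  1 ≤ j ∧ j ≤ i ∧ 0 < redSlack n c f i j ∧ ∀ q, j < q → q ≤ i → redSlack n c f i q = 0

/-- The edge relation of color `i` of the crystal graph `K(c)`:
`g = φ_i(f)` with `f, g` feasible. -/
def Move (n : ℕ) (c : ℕ → ℤ) (i : ℕ) (f g : Node → ℤ) : Prop :=
  Feasible n c f ∧ Feasible n c g ∧ 1 ≤ i ∧ i ≤ n ∧
  ∃ j k, Active n c f i j ∧ IsSwitchNode n c f i j k ∧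
    g = Function.update f (i, k, j) (f (i, k, j) + 1)

/-- `SeqRel n c L f g`: applying the operators `F_i` for `i ∈ L` (head first)
to `f` is defined and yields `g`. -/
def SeqRel (n : ℕ) (c : ℕ → ℤ) : List ℕ → (Node → ℤ) → (Node → ℤ) → Prop
  | [], f, g => f = g
  | i :: L, f, g => ∃ h, Move n c i f h ∧ SeqRel n c L h g

/-- The substring `w_{m,k,j} = F_j F_{j+1} ⋯ F_{j+k-1}` (rightmost applied first),
as a list of colors in order of application. -/
def wList (k j : ℕ) : List ℕ := (List.range k).map fun t => j + k - 1 - t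

/-- The operator string `S_{m,k} = w_{m,k,m-k+1} ⋯ w_{m,k,2} w_{m,k,1}`
as a list of colors in order of application. -/
def sList (m k : ℕ) : List ℕ := ((List.range (m - k + 1)).map fun t => wList k (t + 1)).flatten

/-- The `p`-th power `S_{m,k}^p` as a list of colors in order of application. -/
def sPow (m k p : ℕ) : List ℕ := (List.replicate p (sList m k)).flatten

/-- The composite `S_{m,kmax}^{p kmax} ∘ ⋯ ∘ S_{m,1}^{p 1}` as a list of colors
in order of application. -/
def sPowChain (m : ℕ) (p : ℕ → ℕ) (kmax : ℕ) : List ℕ :=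
  ((List.range kmax).map fun t => sPow m (t + 1) (p (t + 1))).flatten

/-- Replacing each operator `F_j` by `F_{j+1}` in a string. -/
def shiftList (L : List ℕ) : List ℕ := L.map (· + 1)

/-- The string `T_m` obtained from `S_{n-1,m-1}` by replacing each `F_j` by `F_{j+1}`. -/
def tList (n m : ℕ) : List ℕ := shiftList (sList (n - 1) (m - 1))

/-- The composite `T_n^{q n} ∘ ⋯ ∘ T_2^{q 2}` as a list of colors in order of application. -/
def tChain (n : ℕ) (q : ℕ → ℕ) : List ℕ :=
  ((List.range (n - 1)).map fun t => (List.replicate (q (t + 2)) (tList n (t + 2))).flatten).flatten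

/-- The principal function `f[a]`, constant `a_k` on `G^k`. -/
noncomputable def principal (n : ℕ) (a : ℕ → ℤ) : Node → ℤ := fun v =>
  if IsNode n v then a v.2.1 else 0

/-- One (undirected) step in the subgraph of `K(c)` with colors `lo, …, hi`. -/
def ColsStep (n : ℕ) (c : ℕ → ℤ) (lo hi : ℕ) (f g : Node → ℤ) : Prop :=
  ∃ i, lo ≤ i ∧ i ≤ hi ∧ (Move n c i f g ∨ Move n c i g f)

/-- `f` and `g` lie in the same connected component of the subgraph of `K(c)`
formed by all vertices and the edges of colors `lo, …, hi`. -/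
def SameComp (n : ℕ) (c : ℕ → ℤ) (lo hi : ℕ) (f g : Node → ℤ) : Prop :=
  Relation.ReflTransGen (ColsStep n c lo hi) f g

/-- Reachability by directed paths in `K(c)`. -/
def Reach (n : ℕ) (c : ℕ → ℤ) (f g : Node → ℤ) : Prop :=
  Relation.ReflTransGen (fun x y => ∃ i, Move n c i x y) f g

/-- The function `f_{a,Δ}` (with the renaming `x_m(j) = v_{m+j-1}^k(j)`, `m = i - j + 1`). -/
noncomputable def fDelta (n : ℕ) (a Δ : ℕ → ℤ) : Node → ℤ := fun v =>
  if IsNode n v then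
    (let k := v.2.1
     let j := v.2.2
     let m := v.1 + 1 - v.2.2
     if m = k then (if j = n - k + 1 then a k else a k + max (Δ k) 0)
     else if j = n - k + 1 then a k + min (Δ (k - 1)) 0
     else a k + max (Δ k) 0 + min (Δ (k - 1)) 0)
  else 0

/-! ### Crystal axioms -/

/-- `h_i(v)`: the number of edges of the maximal `i`-colored path starting at `v`. -/
noncomputable def headLen {V : Type*} (E : ℕ → V → V → Prop) (i : ℕ) (v : V) : ℕ :=
  sSup {m | ∃ g : ℕ → V, g 0 = v ∧ ∀ l, l < m → E i (g l) (g (l + 1))}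

/-- `t_i(v)`: the number of edges of the maximal `i`-colored path ending at `v`. -/
noncomputable def tailLen {V : Type*} (E : ℕ → V → V → Prop) (i : ℕ) (v : V) : ℕ :=
  sSup {m | ∃ g : ℕ → V, g m = v ∧ ∀ l, l < m → E i (g l) (g (l + 1))}

/-- The label `ℓ_j(e) = h_j(v) - h_j(u)` of an edge `e = (u, v)` w.r.t. color `j`. -/
noncomputable def lab {V : Type*} (E : ℕ → V → V → Prop) (j : ℕ) (u v : V) : ℤ :=
  (headLen E j v : ℤ) - (headLen E j u : ℤ)

/-- Neighboring colors: `|i - j| = 1`. -/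
def Nbr (i j : ℕ) : Prop := i = j + 1 ∨ j = i + 1

/-- Distant colors: `|i - j| ≥ 2`. -/
def Dist (i j : ℕ) : Prop := i + 2 ≤ j ∨ j + 2 ≤ i

/-- The (regular) `A_n`-crystal axioms for an `n`-colored digraph with edge
relations `E i` (`i` the color). -/
structure IsAnCrystal (n : ℕ) {V : Type*} (E : ℕ → V → V → Prop) : Prop where
  colorBound : ∀ i u v, E i u v → 1 ≤ i ∧ i ≤ n
  connected : ∀ u v : V, Relation.ReflTransGen (fun x y => ∃ i, E i x y ∨ E i y x) u v
  outFun : ∀ i u v v', E i u v → E i u v' → v = v'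
  inFun : ∀ i u u' v, E i u v → E i u' v → u = u'
  a1 : ∀ i v, ∃ (t h : ℕ) (g : ℕ → V), g t = v ∧ (∀ m, m < t + h → E i (g m) (g (m + 1))) ∧
      (∀ m m', m ≤ t + h → m' ≤ t + h → g m = g m' → m = m') ∧
      (¬ ∃ u, E i u (g 0)) ∧ (¬ ∃ w, E i (g (t + h)) w)
  a2_tail : ∀ i j u v, E i u v → 1 ≤ j → j ≤ n → j ≠ i → tailLen E j v ≤ tailLen E j u
  a2_head : ∀ i j u v, E i u v → 1 ≤ j → j ≤ n → j ≠ i → headLen E j u ≤ headLen E j v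
  a2_diff : ∀ i j u v, E i u v → 1 ≤ j → j ≤ n → j ≠ i →
      ((headLen E j u : ℤ) - (tailLen E j u : ℤ)) - ((headLen E j v : ℤ) - (tailLen E j v : ℤ))
        = if Nbr i j then -1 else 0
  a2_convex : ∀ i j u v w, E i u v → E i v w → 1 ≤ j → j ≤ n → j ≠ i →
      2 * headLen E j v ≤ headLen E j u + headLen E j w
  a3_fwd : ∀ i j u v v', Nbr i j → E i u v → E j u v' → lab E j u v = 0 →
      lab E i u v' = 1 ∧ ∃ w, E i v' w ∧ E j v w
  a3_bwd : ∀ i j u u' v, Nbr i j → E i u v → E j u' v → lab E j u v = 1 →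
      lab E i u' v = 0 ∧ ∃ w, E i w u' ∧ E j w u
  a4_fwd : ∀ i j u v v', Nbr i j → E i u v → E j u v' → lab E j u v = 1 → lab E i u v' = 1 →
      ∃ w x2 x3 y2 y3, E j v x2 ∧ E j x2 x3 ∧ E i x3 w ∧ E i v' y2 ∧ E i y2 y3 ∧ E j y3 w
  a4_bwd : ∀ i j u u' v, Nbr i j → E i u v → E j u' v → lab E j u v = 0 → lab E i u' v = 0 →
      ∃ w x2 x3 y2 y3, E j x2 u ∧ E j x3 x2 ∧ E i w x3 ∧ E i y2 u' ∧ E i y3 y2 ∧ E j w y3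
  a5_ff : ∀ i j v x w y w', Dist i j → E j v x → E i x w → E i v y → E j y w' → w = w'
  a5_fb : ∀ i j v x w y w', Dist i j → E j x v → E i x w → E i v y → E j w' y → w = w'
  a5_bb : ∀ i j v x w y w', Dist i j → E j x v → E i w x → E i y v → E j w' y → w = w'


/-! On `G^k`, writing `m = i + 1 - j`, the function `f_{a,Δ}` is `a_k + q(m) + p(j)`, where `q`
jumps by `Δ_{k-1}⁻` between the rows `m = k - 1` and `m = k` and `p` jumps by `Δ_k⁺` between the
columns `j = n - k` and `j = n - k + 1`. The slack at `v_i^k(j)` is the mixed second difference of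
the extended function over the square `(m, j - 1)`, `(m, j)`, `(m + 1, j - 1)`, `(m + 1, j)`, so it
vanishes when the square lies in `G^k`. The extension is `c_k` on the column `j = 0` and just below
the top row `m = k`; hence, away from the last column (reached by the top row only at level `n`),
the only nonzero slacks are the jump of `q` at `j = 1` and the corner `m = k`, `j = 1`. -/

lemma isNode_iff {n i k j : ℕ} :
    IsNode n (i, k, j) ↔ 1 ≤ j ∧ j ≤ i ∧ i ≤ n ∧ i + 1 ≤ k + j ∧ k + j ≤ n + 1 := Iff.rfl

lemma isExtNode_iff {n i k j : ℕ} :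
    IsExtNode n (i, k, j) ↔ j ≤ n ∧ j ≤ i ∧ i ≤ n + 1 ∧ 1 ≤ k ∧ k ≤ n := Iff.rfl

section Extension

variable {n : ℕ} (c : ℕ → ℤ) (f : Node → ℤ)

lemma ext_of_isNode {v : Node} (hv : IsNode n v) : ext n c f v = f v := if_pos hv

lemma ext_of_reflTransGen {v w : Node} (hv : ¬ IsNode n v) (hw : IsNode n w)
    (hvw : Relation.ReflTransGen (ExtEdge n) v w) : ext n c f v = c v.2.1 := by
  rw [ext, if_neg hv, if_pos ⟨w, hw, hvw⟩]

lemma reflTransGen_extEdge_zero_column {k : ℕ} (hk : 1 ≤ k) (hkn : k ≤ n) :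
    ∀ t ≤ n + 1, Relation.ReflTransGen (ExtEdge n) (t, k, 0) (1, k, 1)
  | 0, _ => .single ⟨isExtNode_iff.2 (by omega), isExtNode_iff.2 (by omega), .inr ⟨rfl, rfl, rfl⟩⟩
  | t + 1, ht => .head (b := (t, k, 0)) ⟨isExtNode_iff.2 (by omega), isExtNode_iff.2 (by omega),
      .inl ⟨rfl, rfl, rfl⟩⟩ (reflTransGen_extEdge_zero_column hk hkn t (by omega))

lemma ext_zero_column {t k : ℕ} (hk : 1 ≤ k) (hkn : k ≤ n) (ht : t ≤ n + 1) :
    ext n c f (t, k, 0) = c k :=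
  ext_of_reflTransGen c f (by simp [isNode_iff]) (isNode_iff.2 (by omega))
    (reflTransGen_extEdge_zero_column hk hkn t ht)

lemma ext_below_top_row {i k j : ℕ} (hv : IsNode n (i, k, j)) (htop : i + 1 = k + j) :
    ext n c f (i + 1, k, j) = c k := by
  have hv' := isNode_iff.1 hv
  exact ext_of_reflTransGen c f (by rw [isNode_iff]; omega) hv
    (.single ⟨isExtNode_iff.2 (by omega), isExtNode_iff.2 (by omega), .inl ⟨rfl, rfl, rfl⟩⟩)

end Extension

lemma fDelta_of_isNode {n i k j : ℕ} (a Δ : ℕ → ℤ) (hv : IsNode n (i, k, j)) :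
    fDelta n a Δ (i, k, j) = a k + (if i + 1 = k + j then 0 else min (Δ (k - 1)) 0)
      + (if j = n - k + 1 then 0 else max (Δ k) 0) := by
  have hv' := isNode_iff.1 hv
  rw [fDelta, if_pos hv]
  dsimp only
  split_ifs <;> omega

section Slack

variable {n : ℕ} (c a Δ : ℕ → ℤ) {i k j : ℕ}

lemma slack_eq (f : Node → ℤ) :
    slack n c f (i, k, j) = ext n c f (i - 1, k, j - 1) - ext n c f (i, k, j)
      - (ext n c f (i, k, j - 1) - ext n c f (i + 1, k, j)) := rfl

lemma slack_fDelta_interior (hv : IsNode n (i, k, j)) (hj : 2 ≤ j) (hm : i + 1 < k + j) :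
    slack n c (fDelta n a Δ) (i, k, j) = 0 := by
  have hv' := isNode_iff.1 hv
  have hA : IsNode n (i - 1, k, j - 1) := isNode_iff.2 (by omega)
  have hC : IsNode n (i, k, j - 1) := isNode_iff.2 (by omega)
  have hD : IsNode n (i + 1, k, j) := isNode_iff.2 (by omega)
  rw [slack_eq, ext_of_isNode c _ hA, ext_of_isNode c _ hv, ext_of_isNode c _ hC,
    ext_of_isNode c _ hD, fDelta_of_isNode a Δ hA, fDelta_of_isNode a Δ hv,
    fDelta_of_isNode a Δ hC, fDelta_of_isNode a Δ hD]
  split_ifs <;> omega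

lemma slack_fDelta_top_row (hv : IsNode n (i, k, j)) (hi : i < n) (hj : 2 ≤ j)
    (htop : i + 1 = k + j) : slack n c (fDelta n a Δ) (i, k, j) = 0 := by
  have hv' := isNode_iff.1 hv
  have hA : IsNode n (i - 1, k, j - 1) := isNode_iff.2 (by omega)
  have hC : ext n c (fDelta n a Δ) (i, k, j - 1) = c k := by
    simpa [Nat.sub_add_cancel (by omega : 1 ≤ i)] using
      ext_below_top_row c (fDelta n a Δ) hA (by omega)
  rw [slack_eq, ext_of_isNode c _ hA, ext_of_isNode c _ hv, hC, ext_below_top_row c _ hv htop,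
    fDelta_of_isNode a Δ hA, fDelta_of_isNode a Δ hv]
  split_ifs <;> omega

lemma slack_fDelta_first_column (hv : IsNode n (i, k, 1)) (hik : i < k) :
    slack n c (fDelta n a Δ) (i, k, 1) = if i + 1 = k then -min (Δ (k - 1)) 0 else 0 := by
  have hv' := isNode_iff.1 hv
  have hD : IsNode n (i + 1, k, 1) := isNode_iff.2 (by omega)
  rw [slack_eq, ext_zero_column c _ (by omega) (by omega) (by omega), ext_of_isNode c _ hv,
    ext_zero_column c _ (by omega) (by omega) (by omega), ext_of_isNode c _ hD,
    fDelta_of_isNode a Δ hv, fDelta_of_isNode a Δ hD]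
  split_ifs <;> omega

lemma slack_fDelta_corner (hv : IsNode n (k, k, 1)) (hk : k < n) :
    slack n c (fDelta n a Δ) (k, k, 1) = c k - a k - max (Δ k) 0 := by
  have hv' := isNode_iff.1 hv
  rw [slack_eq, ext_zero_column c _ (by omega) (by omega) (by omega), ext_of_isNode c _ hv,
    ext_zero_column c _ (by omega) (by omega) (by omega), ext_below_top_row c _ hv rfl,
    fDelta_of_isNode a Δ hv, if_pos rfl, if_neg (by omega)]
  ring

end Slack

theorem statement5_general (n : ℕ) (c a Δ : ℕ → ℤ)
    (ha : ∀ k, 1 ≤ k → k ≤ n → 0 ≤ a k ∧ a k ≤ c k)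
    (hΔ : ∀ k, 1 ≤ k → k ≤ n - 1 → -(a (k + 1)) ≤ Δ k ∧ Δ k ≤ c k - a k)
    (i k' j : ℕ) (hnode : IsNode n (i, k', j)) (hi : i < n) :
    (¬(i = k' ∧ j = 1) → ¬(i + 1 = k' ∧ j = 1) →
        slack n c (fDelta n a Δ) (i, k', j) = 0) ∧
    (i = k' → j = 1 →
        slack n c (fDelta n a Δ) (i, k', j) = c k' - a k' - max (Δ k') 0 ∧
        0 ≤ c k' - a k' - max (Δ k') 0) ∧
    (i + 1 = k' → j = 1 →
        slack n c (fDelta n a Δ) (i, k', j) = - min (Δ (k' - 1)) 0 ∧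
        0 ≤ - min (Δ (k' - 1)) 0) := by
  have hv := isNode_iff.1 hnode
  refine ⟨fun hcorner hjump => ?_, ?_, ?_⟩
  · rcases Nat.lt_or_ge j 2 with hj | hj
    · obtain rfl : j = 1 := by omega
      rw [slack_fDelta_first_column c a Δ hnode (by omega), if_neg (by omega)]
    · rcases Nat.lt_or_ge (i + 1) (k' + j) with hm | hm
      · exact slack_fDelta_interior c a Δ hnode hj hm
      · exact slack_fDelta_top_row c a Δ hnode hi hj (by omega)
  · rintro rfl rfl
    have hΔi := (hΔ i (by omega) (by omega)).2
    have hai := (ha i (by omega) (by omega)).2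
    exact ⟨slack_fDelta_corner c a Δ hnode hi, sub_nonneg.2 (max_le hΔi (sub_nonneg.2 hai))⟩
  · rintro rfl rfl
    rw [slack_fDelta_first_column c a Δ hnode (by omega), if_pos rfl]
    exact ⟨rfl, neg_nonneg.2 (min_le_right _ 0)⟩

/-- Claim. Slacks of `f = f_{a,Δ}` at nodes `v = v_i^{k'}(j)` of
`G^{k'}` at levels `i < n`:
(a) `ε(v) = 0` unless `v = v_{k'}^{k'}(1)` or `v = v_{k'-1}^{k'}(1)`;
(b) `ε(v_{k'}^{k'}(1)) = c_{k'} - a_{k'} - Δ_{k'}⁺ ≥ 0`;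
(c) `ε(v_{k'-1}^{k'}(1)) = -Δ_{k'-1}⁻ ≥ 0`. -/
theorem statement5 (n : ℕ) (hn : 2 ≤ n) (c a Δ : ℕ → ℤ)
    (hc : ∀ k, 1 ≤ k → k ≤ n → 0 ≤ c k)
    (ha : ∀ k, 1 ≤ k → k ≤ n → 0 ≤ a k ∧ a k ≤ c k)
    (hΔ : ∀ k, 1 ≤ k → k ≤ n - 1 → -(a (k + 1)) ≤ Δ k ∧ Δ k ≤ c k - a k)
    (hΔ0 : Δ 0 = 0) (hΔn : Δ n = 0)
    (i k' j : ℕ) (hnode : IsNode n (i, k', j)) (hi : i < n) :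
    (¬(i = k' ∧ j = 1) → ¬(i + 1 = k' ∧ j = 1) →
        slack n c (fDelta n a Δ) (i, k', j) = 0) ∧
    (i = k' → j = 1 →
        slack n c (fDelta n a Δ) (i, k', j) = c k' - a k' - max (Δ k') 0 ∧
        0 ≤ c k' - a k' - max (Δ k') 0) ∧
    (i + 1 = k' → j = 1 →
        slack n c (fDelta n a Δ) (i, k', j) = - min (Δ (k' - 1)) 0 ∧
        0 ≤ - min (Δ (k' - 1)) 0) :=
  statement5_general n c a Δ ha hΔ i k' j hnode hi

end CrystalA
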